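/- arXiv:1707.05065 — 4 statements merged into one kernel-verified Lean document; each statement's English description precedes it below -/
import Mathlib

section
/- Let V be a finite set with n = |V| and f : 2^V → ℝ a submodular function with f(∅) = 0. Let z be the unique point of minimum Euclidean norm in B(f), and set S* = {v ∈ V : z(v) < 0}. Then S* is a minimizer of f over 2^V, every minimizer of f contains S* (i.e., S* is the inclusionwise minimal minimizer), and |f(S*)| ≤ √n · ‖z‖₂. -/
open Finset

noncomputable section
open scoped Classical

variable {V : Type*} [Fintype V] [DecidableEq V]

/-- A set function `f : 2^V → ℝ` is submodular if
`f(X∩Y) + f(X∪Y) ≤ f(X) + f(Y)` for all `X, Y ⊆ V`. -/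
def IsSubmodular (f : Finset V → ℝ) : Prop :=
  ∀ X Y : Finset V, f (X ∩ Y) + f (X ∪ Y) ≤ f X + f Y

/-- The base polytope `B(f)` of a submodular function. -/
def basePolytope (f : Finset V → ℝ) : Set (V → ℝ) :=
  {x | (∀ S : Finset V, ∑ v ∈ S, x v ≤ f S) ∧ (∑ v, x v) = f Finset.univ}

/-! Two facts drive the proof. Tight sets of a point `x ∈ B(f)` (those with `x(S) = f(S)`) are
closed under `∩` and `∪`, by submodularity. And if `z` is the min-norm point and `z v < z u`, some
tight set contains `v` but not `u`: otherwise shifting a small mass `ε` from `u` to `v` stays in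
`B(f)` and shortens `z`. Intersecting and uniting such separating sets shows that every strict
sublevel set of `z`, in particular `S* = {z < 0}`, is tight. Then `f(S*) = z(S*) ≤ z(T) ≤ f(T)`,
with `z(S*) < z(T)` when `S* ⊄ T`; combined with submodularity on `T ∩ S*` and `T ∪ S*` this gives
inclusionwise minimality. Finally `|f(S*)| = -z(S*) ≤ ‖z‖₁ ≤ √n ‖z‖₂`. -/

def IsTight (f : Finset V → ℝ) (x : V → ℝ) (S : Finset V) : Prop :=
  ∑ v ∈ S, x v = f S

section TightSets

variable {f : Finset V → ℝ} {x : V → ℝ}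

omit [Fintype V] in
theorem IsTight.inter_union (hf : IsSubmodular f) (hx : ∀ S : Finset V, ∑ v ∈ S, x v ≤ f S)
    {S T : Finset V} (hS : IsTight f x S) (hT : IsTight f x T) :
    IsTight f x (S ∩ T) ∧ IsTight f x (S ∪ T) := by
  unfold IsTight at *
  have hsum := Finset.sum_union_inter (s₁ := S) (s₂ := T) (f := x)
  constructor <;> linarith [hx (S ∩ T), hx (S ∪ T), hf S T]

theorem isTight_inf (hf : IsSubmodular f) (hx : x ∈ basePolytope f) {ι : Type*}
    (s : Finset ι) (g : ι → Finset V) (hg : ∀ i ∈ s, IsTight f x (g i)) :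
    IsTight f x (s.inf g) :=
  Finset.inf_induction (by rw [Finset.top_eq_univ]; exact hx.2)
    (fun _ hS _ hT => (hS.inter_union hf hx.1 hT).1) hg

omit [Fintype V] in
theorem isTight_sup (hf : IsSubmodular f) (hx : ∀ S : Finset V, ∑ v ∈ S, x v ≤ f S)
    (h0 : f ∅ = 0) {ι : Type*} (s : Finset ι) (g : ι → Finset V)
    (hg : ∀ i ∈ s, IsTight f x (g i)) : IsTight f x (s.sup g) :=
  Finset.sup_induction (by rw [Finset.bot_eq_empty, IsTight, Finset.sum_empty, h0])
    (fun _ hS _ hT => (hS.inter_union hf hx hT).2) hg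

theorem isTight_of_forall_exists_isTight_mem_notMem (hf : IsSubmodular f)
    (hx : x ∈ basePolytope f) (h0 : f ∅ = 0) (L : Finset V)
    (hsep : ∀ v ∈ L, ∀ u ∉ L, ∃ S, IsTight f x S ∧ v ∈ S ∧ u ∉ S) : IsTight f x L := by
  have hcover : ∀ v ∈ L, ∃ T, IsTight f x T ∧ v ∈ T ∧ T ⊆ L := by
    intro v hv
    choose! S hS using hsep v hv
    refine ⟨(Finset.univ.filter (· ∉ L)).inf S,
      isTight_inf hf hx _ _ fun u hu => (hS u (Finset.mem_filter.1 hu).2).1,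
      Finset.mem_inf.2 fun u hu => (hS u (Finset.mem_filter.1 hu).2).2.1, fun w hw => ?_⟩
    by_contra hwL
    exact (hS w hwL).2.2 (Finset.mem_inf.1 hw w (by simp [hwL]))
  choose! T hT using hcover
  have hL : L.sup T = L := le_antisymm (Finset.sup_le fun v hv => (hT v hv).2.2)
    fun v hv => Finset.mem_sup.2 ⟨v, hv, (hT v hv).2.1⟩
  rw [← hL]
  exact isTight_sup hf hx.1 h0 L T fun v hv => (hT v hv).1

end TightSets

section Exchange

theorem exists_pos_forall_le_of_forall_pos {α : Type*} [Finite α] (P : α → Prop) (g : α → ℝ)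
    (hg : ∀ a, P a → 0 < g a) : ∃ ε > 0, ∀ a, P a → ε ≤ g a := by
  cases isEmpty_or_nonempty α
  · exact ⟨1, one_pos, fun a => isEmptyElim a⟩
  classical
  obtain ⟨a₀, ha₀⟩ := Finite.exists_min fun a => if P a then g a else 1
  refine ⟨if P a₀ then g a₀ else 1, ?_, fun a ha => by simpa [ha] using ha₀ a⟩
  split_ifs with h
  exacts [hg a₀ h, one_pos]

omit [Fintype V] in
theorem sum_add_single_sub_single (x : V → ℝ) (v u : V) (ε : ℝ) (S : Finset V) :
    ∑ w ∈ S, (x + Pi.single v ε - Pi.single u ε : V → ℝ) w =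
      ∑ w ∈ S, x w + ((if v ∈ S then ε else 0) - if u ∈ S then ε else 0) := by
  simp only [Pi.sub_apply, Pi.add_apply, Finset.sum_sub_distrib, Finset.sum_add_distrib,
    Finset.sum_pi_single']
  ring

theorem sum_sq_add_single_sub_single (x : V → ℝ) {v u : V} (hvu : v ≠ u) (ε : ℝ) :
    ∑ w, (x + Pi.single v ε - Pi.single u ε : V → ℝ) w ^ 2 =
      ∑ w, x w ^ 2 - 2 * ε * (x u - x v - ε) := by
  have hdiff : ∑ w, ((x + Pi.single v ε - Pi.single u ε : V → ℝ) w ^ 2 - x w ^ 2) =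
      2 * ε * (x v - x u + ε) :=
    (Fintype.sum_eq_add v u hvu fun w hw => by simp [hw.1, hw.2]).trans <| by
      simp [hvu, hvu.symm]; ring
  rw [Finset.sum_sub_distrib] at hdiff
  linarith

variable {f : Finset V → ℝ} {x : V → ℝ}

theorem add_single_sub_single_mem_basePolytope (hx : x ∈ basePolytope f) {v u : V} {ε : ℝ}
    (hε : 0 ≤ ε) (hslack : ∀ S : Finset V, v ∈ S → u ∉ S → ∑ w ∈ S, x w + ε ≤ f S) :
    x + Pi.single v ε - Pi.single u ε ∈ basePolytope f := by
  refine ⟨fun S => ?_, ?_⟩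
  · rw [sum_add_single_sub_single]
    by_cases hv : v ∈ S <;> by_cases hu : u ∈ S <;> simp only [hv, hu, if_true, if_false]
    · linarith [hx.1 S]
    · linarith [hslack S hv hu]
    · linarith [hx.1 S]
    · linarith [hx.1 S]
  · rw [sum_add_single_sub_single]
    simpa using hx.2

theorem exists_isTight_mem_notMem_of_lt (hz : x ∈ basePolytope f)
    (hmin : ∀ y ∈ basePolytope f, ∑ v, x v ^ 2 ≤ ∑ v, y v ^ 2) {v u : V} (hvu : x v < x u) :
    ∃ S, IsTight f x S ∧ v ∈ S ∧ u ∉ S := by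
  by_contra! hsep
  obtain ⟨δ, hδ, hslack⟩ := exists_pos_forall_le_of_forall_pos (fun S => v ∈ S ∧ u ∉ S)
    (fun S => f S - ∑ w ∈ S, x w)
    fun S hS => sub_pos.2 <| (hz.1 S).lt_of_ne fun h => hS.2 (hsep S h hS.1)
  have hne : v ≠ u := fun h => (h ▸ hvu).false
  set ε := min δ ((x u - x v) / 2)
  have hε : 0 < ε := lt_min hδ (by linarith)
  have hεδ : ε ≤ δ := min_le_left _ _
  have hεgap : ε ≤ (x u - x v) / 2 := min_le_right _ _
  have hnorm := hmin _ <| add_single_sub_single_mem_basePolytope hz hε.le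
    fun S hv hu => by linarith [hslack S ⟨hv, hu⟩]
  rw [sum_sq_add_single_sub_single x hne] at hnorm
  nlinarith

theorem isTight_filter_lt_of_minNorm (hf : IsSubmodular f) (h0 : f ∅ = 0)
    (hz : x ∈ basePolytope f) (hmin : ∀ y ∈ basePolytope f, ∑ v, x v ^ 2 ≤ ∑ v, y v ^ 2)
    (c : ℝ) : IsTight f x (Finset.univ.filter fun v => x v < c) :=
  isTight_of_forall_exists_isTight_mem_notMem hf hz h0 _ fun v hv u hu =>
    exists_isTight_mem_notMem_of_lt hz hmin <|
      (Finset.mem_filter.1 hv).2.trans_le (not_lt.1 fun h => hu (by simp [h]))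

end Exchange

section NegativePart

variable (x : V → ℝ)

theorem sum_filter_neg_le_sum (T : Finset V) :
    ∑ v ∈ Finset.univ.filter (fun v => x v < 0), x v ≤ ∑ v ∈ T, x v := by
  set N := Finset.univ.filter fun v => x v < 0
  have hN := Finset.sum_inter_add_sum_sdiff N T x
  have hT := Finset.sum_inter_add_sum_sdiff T N x
  have hNT : ∑ v ∈ N \ T, x v ≤ 0 :=
    Finset.sum_nonpos fun v hv => (Finset.mem_filter.1 (Finset.mem_sdiff.1 hv).1).2.le
  have hTN : 0 ≤ ∑ v ∈ T \ N, x v :=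
    Finset.sum_nonneg fun v hv => not_lt.1 fun h => (Finset.mem_sdiff.1 hv).2 (by simp [N, h])
  rw [Finset.inter_comm] at hT
  linarith

theorem sum_filter_neg_lt_sum_of_ssubset {T : Finset V}
    (hT : T ⊂ Finset.univ.filter fun v => x v < 0) :
    ∑ v ∈ Finset.univ.filter (fun v => x v < 0), x v < ∑ v ∈ T, x v := by
  rw [← Finset.sum_sdiff hT.subset, add_lt_iff_neg_right]
  exact Finset.sum_neg (fun v hv => (Finset.mem_filter.1 (Finset.mem_sdiff.1 hv).1).2)
    (Finset.sdiff_nonempty.2 hT.not_subset)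

omit [DecidableEq V] in
theorem sum_abs_le_sqrt_card_mul_sqrt_sum_sq :
    ∑ v, |x v| ≤ Real.sqrt (Fintype.card V) * Real.sqrt (∑ v, x v ^ 2) := by
  simpa [sq_abs, Finset.card_univ] using
    Real.sum_mul_le_sqrt_mul_sqrt Finset.univ (fun _ => (1 : ℝ)) fun v => |x v|

omit [DecidableEq V] in
theorem neg_sum_filter_neg_le_sum_abs :
    -∑ v ∈ Finset.univ.filter (fun v => x v < 0), x v ≤ ∑ v, |x v| := by
  rw [← Finset.sum_neg_distrib]
  exact (Finset.sum_le_sum fun v _ => neg_le_abs (x v)).trans <|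
    Finset.sum_le_sum_of_subset_of_nonneg (Finset.subset_univ _) fun v _ _ => abs_nonneg (x v)

end NegativePart

/-- Fujishige's theorem: if `z` is the minimum Euclidean norm point of `B(f)`, then
`S* = {v : z(v) < 0}` is the inclusionwise minimal minimizer of `f`, and
`|f(S*)| ≤ √n ‖z‖₂`. -/
theorem fujishige_min_norm (f : Finset V → ℝ) (hf : IsSubmodular f) (h0 : f ∅ = 0)
    (z : V → ℝ) (hz : z ∈ basePolytope f)
    (hmin : ∀ x ∈ basePolytope f,
      Real.sqrt (∑ v, (z v) ^ 2) ≤ Real.sqrt (∑ v, (x v) ^ 2)) :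
    (∀ T : Finset V, f (Finset.univ.filter fun v => z v < 0) ≤ f T) ∧
    (∀ T : Finset V, (∀ T' : Finset V, f T ≤ f T') →
      (Finset.univ.filter fun v => z v < 0) ⊆ T) ∧
    |f (Finset.univ.filter fun v => z v < 0)| ≤
      Real.sqrt (Fintype.card V) * Real.sqrt (∑ v, (z v) ^ 2) := by
  set N := Finset.univ.filter fun v => z v < 0
  have htight : ∑ v ∈ N, z v = f N := isTight_filter_lt_of_minNorm hf h0 hz
    (fun x hx => (Real.sqrt_le_sqrt_iff (by positivity)).1 (hmin x hx)) 0
  have hle : ∀ T, f N ≤ f T := fun T => htight ▸ (sum_filter_neg_le_sum z T).trans (hz.1 T)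
  refine ⟨hle, fun T hT => ?_, ?_⟩
  · by_contra hNT
    have hlt : f N < f (T ∩ N) := htight ▸ (sum_filter_neg_lt_sum_of_ssubset z
      ⟨Finset.inter_subset_right, fun h => hNT (h.trans Finset.inter_subset_left)⟩).trans_le
        (hz.1 _)
    linarith [hf T N, hT (T ∪ N)]
  · rw [abs_of_nonpos (h0 ▸ hle ∅), ← htight]
    exact (neg_sum_filter_neg_le_sum_abs z).trans (sum_abs_le_sqrt_card_mul_sqrt_sum_sq z)
end
end

section
/- Let V be a finite set with n = |V| and f : 2^V → ℤ an integer-valued submodular function with f(∅) = 0. Let μ be a nonnegative integer such that min_{S⊆V} f(S) < −μ ≤ min{0, f(V)}. Then the condition number satisfies ω_μ ≥ 1/(4 n L₂(f)). -/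
open Finset

noncomputable section
open scoped Classical

variable {V : Type*} [Fintype V] [DecidableEq V]

/-- The `μ`-enlargement `f_μ` of `f`. -/
def muEnlargement (f : Finset V → ℝ) (μ : ℝ) : Finset V → ℝ :=
  fun S => if S = ∅ ∨ S = Finset.univ then 0 else f S + μ

/-- `L₂(f) = max{‖z‖₂ : z ∈ B(f)}`. -/
noncomputable def Ltwo (f : Finset V → ℝ) : ℝ :=
  sSup {t : ℝ | ∃ x ∈ basePolytope f, t = Real.sqrt (∑ v, (x v) ^ 2)}

/-- `F_μ = Σ_μ ∩ 𝔹ⁿ`, where `Σ_μ = {w : wᵀx ≥ 0 for all x ∈ B(f_μ)}` and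
`𝔹ⁿ` is the Euclidean unit ball. -/
def Fmu (f : Finset V → ℝ) (μ : ℝ) : Set (V → ℝ) :=
  {w | (∀ x ∈ basePolytope (muEnlargement f μ), 0 ≤ ∑ v, w v * x v) ∧
    (∑ v, (w v) ^ 2) ≤ 1}

/-- `width_X(a) = max{aᵀz : z ∈ X}`. -/
noncomputable def widthIn (X : Set (V → ℝ)) (a : V → ℝ) : ℝ :=
  sSup {t : ℝ | ∃ z ∈ X, t = ∑ v, a v * z v}

/-- The condition number `ω_μ = min{width_{F_μ}(x)/‖x‖₂ : x ∈ B(f_μ), x ≠ 0}`. -/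
noncomputable def omegaMu (f : Finset V → ℝ) (μ : ℝ) : ℝ :=
  sInf {t : ℝ | ∃ x ∈ basePolytope (muEnlargement f μ), x ≠ 0 ∧
    t = widthIn (Fmu f μ) x / Real.sqrt (∑ v, (x v) ^ 2)}

lemma greedy_exists (g : Finset V → ℝ) (hg : IsSubmodular g) (h0 : g ∅ = 0) :
    ∀ (n : ℕ) (U T : Finset V), U.card = n → T ⊆ U →
    ∃ z : V → ℝ, (∀ S, S ⊆ U → ∑ v ∈ S, z v ≤ g S) ∧
      (∑ v ∈ U, z v = g U) ∧ (∑ v ∈ T, z v = g T) := by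
  intro n
  induction n with
  | zero =>
    intro U T hU hT
    have hUe : U = ∅ := Finset.card_eq_zero.mp hU
    subst hUe
    have hTe : T = ∅ := Finset.subset_empty.mp hT
    subst hTe
    refine ⟨0, ?_, by simp [h0], by simp [h0]⟩
    intro S hS
    have : S = ∅ := Finset.subset_empty.mp hS
    subst this
    simp [h0]
  | succ n ih =>
    intro U T hU hT
    have hUne : U.Nonempty := Finset.card_pos.mp (by omega)
    have hkey : ∀ u ∈ U, ∀ z' : V → ℝ,
        (∀ S, S ⊆ U.erase u → ∑ v ∈ S, z' v ≤ g S) →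
        (∑ v ∈ U.erase u, z' v = g (U.erase u)) →
        ((∀ S, S ⊆ U → ∑ v ∈ S, (if v = u then g U - g (U.erase u) else z' v) ≤ g S) ∧
         (∑ v ∈ U, (if v = u then g U - g (U.erase u) else z' v) = g U) ∧
         (∀ T', T' ⊆ U.erase u →
            ∑ v ∈ T', (if v = u then g U - g (U.erase u) else z' v) = ∑ v ∈ T', z' v)) := by
      intro u hu z' h2 h3
      have hcongr : ∀ T' : Finset V, u ∉ T' →
          ∑ v ∈ T', (if v = u then g U - g (U.erase u) else z' v) = ∑ v ∈ T', z' v := by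
        intro T' hT'
        apply Finset.sum_congr rfl
        intro v hv
        have : v ≠ u := fun h => hT' (h ▸ hv)
        simp [this]
      have hsum_mem : ∀ S : Finset V, u ∈ S →
          ∑ v ∈ S, (if v = u then g U - g (U.erase u) else z' v)
            = (g U - g (U.erase u)) + ∑ v ∈ S.erase u, z' v := by
        intro S huS
        rw [← Finset.add_sum_erase _ _ huS, if_pos rfl]
        congr 1
        apply Finset.sum_congr rfl
        intro v hv
        simp [Finset.ne_of_mem_erase hv]
      constructor
      · intro S hS
        by_cases huS : u ∈ S
        · rw [hsum_mem S huS]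
          have h1 : ∑ v ∈ S.erase u, z' v ≤ g (S.erase u) :=
            h2 _ (Finset.erase_subset_erase u hS)
          have h4 := hg (U.erase u) S
          have hin : (U.erase u) ∩ S = S.erase u := by
            ext v; simp only [Finset.mem_inter, Finset.mem_erase]
            constructor
            · rintro ⟨⟨hne, _⟩, hvS⟩; exact ⟨hne, hvS⟩
            · rintro ⟨hne, hvS⟩; exact ⟨⟨hne, hS hvS⟩, hvS⟩
          have hun : (U.erase u) ∪ S = U := by
            ext v; simp only [Finset.mem_union, Finset.mem_erase]
            constructor
            · rintro (⟨_, hvU⟩ | hvS); exact hvU; exact hS hvS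
            · intro hvU
              by_cases hvu : v = u
              · exact Or.inr (hvu ▸ huS)
              · exact Or.inl ⟨hvu, hvU⟩
          rw [hin, hun] at h4
          linarith
        · rw [hcongr S huS]
          exact h2 S (Finset.subset_erase.mpr ⟨hS, huS⟩)
      · constructor
        · rw [hsum_mem U hu, h3]; ring
        · intro T' hT'
          exact hcongr T' (fun h => (Finset.mem_erase.mp (hT' h)).1 rfl)
    by_cases hTU : T = U
    · obtain ⟨u, hu⟩ := hUne
      obtain ⟨z', h2, h3, _⟩ := ih (U.erase u) (U.erase u)
        (by rw [Finset.card_erase_of_mem hu, hU]; rfl) (Finset.Subset.refl _)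
      obtain ⟨c1, c2, _⟩ := hkey u hu z' h2 h3
      subst hTU
      exact ⟨_, c1, c2, c2⟩
    · have : ∃ u ∈ U, u ∉ T := by
        by_contra h
        push_neg at h
        exact hTU (Finset.Subset.antisymm hT h)
      obtain ⟨u, hu, huT⟩ := this
      obtain ⟨z', h2, h3, h4⟩ := ih (U.erase u) T
        (by rw [Finset.card_erase_of_mem hu, hU]; rfl)
        (Finset.subset_erase.mpr ⟨hT, huT⟩)
      obtain ⟨c1, c2, c3⟩ := hkey u hu z' h2 h3
      refine ⟨_, c1, c2, ?_⟩
      rw [c3 T (Finset.subset_erase.mpr ⟨hT, huT⟩), h4]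

lemma muEnlargement_submodular (f : Finset V → ℝ) (hf : IsSubmodular f) (h0 : f ∅ = 0)
    (μ : ℝ) (hμ : 0 ≤ μ) (hV : -μ ≤ f Finset.univ) :
    IsSubmodular (muEnlargement f μ) := by
  have e0 : muEnlargement f μ ∅ = 0 := by simp [muEnlargement]
  have eU : muEnlargement f μ Finset.univ = 0 := by simp [muEnlargement]
  intro X Y
  by_cases hX0 : X = ∅
  · subst hX0; rw [Finset.empty_inter, Finset.empty_union]
  by_cases hY0 : Y = ∅
  · subst hY0; rw [Finset.inter_empty, Finset.union_empty]; linarith [le_refl (muEnlargement f μ X)]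
  by_cases hXu : X = Finset.univ
  · subst hXu
    rw [Finset.univ_inter, Finset.univ_subset_iff.mp Finset.subset_union_left]
    linarith [le_refl (muEnlargement f μ Y)]
  by_cases hYu : Y = Finset.univ
  · subst hYu
    rw [Finset.inter_univ, Finset.univ_subset_iff.mp Finset.subset_union_right]
  have hgX : muEnlargement f μ X = f X + μ := by simp [muEnlargement, hX0, hXu]
  have hgY : muEnlargement f μ Y = f Y + μ := by simp [muEnlargement, hY0, hYu]
  have hIu : X ∩ Y ≠ Finset.univ := by
    intro h
    exact hXu (Finset.univ_subset_iff.mp (h ▸ Finset.inter_subset_left))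
  have hU0 : X ∪ Y ≠ ∅ := by
    intro h
    exact hX0 (Finset.union_eq_empty.mp h).1
  have hsub := hf X Y
  rw [hgX, hgY]
  by_cases hI0 : X ∩ Y = ∅ <;> by_cases hUu : X ∪ Y = Finset.univ
  · rw [hI0, hUu] at hsub ⊢
    rw [e0, eU]
    rw [h0] at hsub
    linarith
  · have eu : muEnlargement f μ (X ∪ Y) = f (X ∪ Y) + μ := by
      simp [muEnlargement, hU0, hUu]
    rw [hI0, e0, eu]
    rw [hI0, h0] at hsub
    linarith
  · have ei : muEnlargement f μ (X ∩ Y) = f (X ∩ Y) + μ := by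
      simp [muEnlargement, hI0, hIu]
    rw [hUu, eU, ei]
    rw [hUu] at hsub
    linarith
  · have eu : muEnlargement f μ (X ∪ Y) = f (X ∪ Y) + μ := by
      simp [muEnlargement, hU0, hUu]
    have ei : muEnlargement f μ (X ∩ Y) = f (X ∩ Y) + μ := by
      simp [muEnlargement, hI0, hIu]
    rw [eu, ei]
    linarith

lemma cauchy_schwarz_sum (x z : V → ℝ) :
    ∑ v, x v * z v ≤ Real.sqrt (∑ v, x v ^ 2) * Real.sqrt (∑ v, z v ^ 2) := by
  have h := Finset.sum_mul_sq_le_sq_mul_sq Finset.univ x z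
  have h1 : ∑ v, x v * z v ≤ |∑ v, x v * z v| := le_abs_self _
  have h2 : |∑ v, x v * z v| = Real.sqrt ((∑ v, x v * z v) ^ 2) := (Real.sqrt_sq_eq_abs _).symm
  rw [h2] at h1
  refine h1.trans ?_
  rw [← Real.sqrt_mul (by positivity)]
  exact Real.sqrt_le_sqrt h

lemma l1_le_sqrt_card (z : V → ℝ) :
    ∑ v, |z v| ≤ Real.sqrt (Fintype.card V) * Real.sqrt (∑ v, z v ^ 2) := by
  have h := cauchy_schwarz_sum (fun _ : V => (1 : ℝ)) (fun v => |z v|)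
  simp only [one_mul, one_pow, sq_abs] at h
  have h2 : ∑ _v : V, (1:ℝ) = (Fintype.card V : ℝ) := by simp
  rw [h2] at h
  exact h

lemma l2_le_l1 (z : V → ℝ) : Real.sqrt (∑ v, z v ^ 2) ≤ ∑ v, |z v| := by
  have hnn : ∀ i ∈ Finset.univ, 0 ≤ |z i| := fun i _ => abs_nonneg (z i)
  have h : ∑ v, z v ^ 2 ≤ (∑ v, |z v|) ^ 2 := by
    have h3 := Finset.sum_sq_le_sq_sum_of_nonneg hnn
    simpa [sq_abs] using h3
  calc Real.sqrt (∑ v, z v ^ 2) ≤ Real.sqrt ((∑ v, |z v|) ^ 2) := Real.sqrt_le_sqrt h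
    _ = ∑ v, |z v| := Real.sqrt_sq (Finset.sum_nonneg fun i _ => abs_nonneg _)

/-- For an integer valued submodular function `f` and a nonnegative integer `μ`
with `min_S f(S) < -μ ≤ min{0, f(V)}`, the condition number satisfies
`ω_μ ≥ 1/(4 n L₂(f))`. -/
theorem omegaMu_lower_bound (f : Finset V → ℝ) (hf : IsSubmodular f) (h0 : f ∅ = 0)
    (hint : ∀ S : Finset V, ∃ m : ℤ, f S = (m : ℝ))
    (μ : ℕ)
    (hlow : ∃ S : Finset V, f S < -(μ : ℝ))
    (hup : -(μ : ℝ) ≤ min 0 (f Finset.univ)) :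
    1 / (4 * (Fintype.card V : ℝ) * Ltwo f) ≤ omegaMu f (μ : ℝ) := by
  classical
  obtain ⟨S₀, hS₀⟩ := hlow
  have hμ0 : (0:ℝ) ≤ (μ:ℝ) := Nat.cast_nonneg μ
  have hfV : -(μ:ℝ) ≤ f Finset.univ := le_trans hup (min_le_right _ _)
  have hS₀ne : S₀ ≠ ∅ := by rintro rfl; rw [h0] at hS₀; linarith
  have hS₀nu : S₀ ≠ Finset.univ := by rintro rfl; linarith
  -- integrality : f S₀ + μ ≤ -1
  have hint1 : f S₀ + (μ:ℝ) ≤ -1 := by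
    obtain ⟨m, hm⟩ := hint S₀
    rw [hm] at hS₀ ⊢
    have h2 : m < -(μ:ℤ) := by exact_mod_cast hS₀
    have h3 : m ≤ -(μ:ℤ) - 1 := by omega
    have h4 : (m:ℝ) ≤ ((-(μ:ℤ) - 1 : ℤ) : ℝ) := by exact_mod_cast h3
    push_cast at h4
    linarith
  -- greedy points of B(f)
  have greedyf : ∀ T : Finset V, ∃ z ∈ basePolytope f, ∑ v ∈ T, z v = f T := by
    intro T
    obtain ⟨z, h2, h3, h4⟩ := greedy_exists f hf h0 (Finset.univ.card) Finset.univ T rfl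
      (Finset.subset_univ T)
    exact ⟨z, ⟨fun S => h2 S (Finset.subset_univ S), h3⟩, h4⟩
  -- boundedness of B(f)
  have hBddf : BddAbove {t : ℝ | ∃ x ∈ basePolytope f, t = Real.sqrt (∑ v, (x v) ^ 2)} := by
    set K : ℝ := (Finset.univ : Finset (Finset V)).sup' ⟨∅, Finset.mem_univ _⟩ (fun T => |f T|)
      with hKdef
    have hK : ∀ T : Finset V, |f T| ≤ K := by
      intro T
      rw [hKdef]
      exact Finset.le_sup' (fun T : Finset V => |f T|) (Finset.mem_univ T)
    have hK0 : 0 ≤ K := le_trans (abs_nonneg (f ∅)) (hK ∅)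
    refine ⟨Real.sqrt ((Fintype.card V : ℝ) * (2*K)^2), ?_⟩
    rintro t ⟨x, hx, rfl⟩
    apply Real.sqrt_le_sqrt
    have hcoord : ∀ v : V, |x v| ≤ 2*K := by
      intro v
      have hub : x v ≤ f {v} := by
        have := hx.1 {v}
        simpa using this
      have hlb : f Finset.univ - f (Finset.univ.erase v) ≤ x v := by
        have h5 : x v + ∑ u ∈ Finset.univ.erase v, x u = ∑ u, x u :=
          Finset.add_sum_erase _ _ (Finset.mem_univ v)
        have h6 : ∑ u ∈ Finset.univ.erase v, x u ≤ f (Finset.univ.erase v) := hx.1 _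
        have h7 := hx.2
        linarith
      have k1 := abs_le.mp (hK {v})
      have k2 := abs_le.mp (hK Finset.univ)
      have k3 := abs_le.mp (hK (Finset.univ.erase v))
      rw [abs_le]
      constructor <;> linarith
    have : ∀ v : V, x v ^ 2 ≤ (2*K)^2 := by
      intro v
      have := hcoord v
      nlinarith [abs_nonneg (x v), le_abs_self (x v), neg_abs_le (x v)]
    calc ∑ v, x v ^ 2 ≤ ∑ _v : V, (2*K)^2 := Finset.sum_le_sum (fun v _ => this v)
      _ = (Fintype.card V : ℝ) * (2*K)^2 := by
        rw [Finset.sum_const, Finset.card_univ, nsmul_eq_mul]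
  have hLz : ∀ z ∈ basePolytope f, Real.sqrt (∑ v, (z v) ^ 2) ≤ Ltwo f :=
    fun z hz => le_csSup hBddf ⟨z, hz, rfl⟩
  -- upper & lower bounds on f
  have hfle : ∀ T : Finset V, f T ≤ Real.sqrt (Fintype.card V) * Ltwo f := by
    intro T
    obtain ⟨z, hz, hzT⟩ := greedyf T
    have h1 : f T = ∑ v ∈ T, z v := hzT.symm
    have h2 : ∑ v ∈ T, z v ≤ ∑ v ∈ T, |z v| :=
      Finset.sum_le_sum fun v _ => le_abs_self _
    have h3 : ∑ v ∈ T, |z v| ≤ ∑ v, |z v| :=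
      Finset.sum_le_sum_of_subset_of_nonneg (Finset.subset_univ T)
        (fun v _ _ => abs_nonneg _)
    have h4 := l1_le_sqrt_card z
    have h5 := hLz z hz
    have h6 : Real.sqrt (Fintype.card V) * Real.sqrt (∑ v, z v ^ 2)
        ≤ Real.sqrt (Fintype.card V) * Ltwo f :=
      mul_le_mul_of_nonneg_left h5 (Real.sqrt_nonneg _)
    linarith
  have hfge : ∀ T : Finset V, -(Real.sqrt (Fintype.card V) * Ltwo f) ≤ f T := by
    intro T
    obtain ⟨z, hz, _⟩ := greedyf ∅
    have h1 : ∑ v ∈ T, z v ≤ f T := hz.1 T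
    have h2 : -∑ v ∈ T, |z v| ≤ ∑ v ∈ T, z v := by
      rw [← Finset.sum_neg_distrib]
      exact Finset.sum_le_sum fun v _ => neg_abs_le _
    have h3 : ∑ v ∈ T, |z v| ≤ ∑ v, |z v| :=
      Finset.sum_le_sum_of_subset_of_nonneg (Finset.subset_univ T)
        (fun v _ _ => abs_nonneg _)
    have h4 := l1_le_sqrt_card z
    have h5 := hLz z hz
    have h6 : Real.sqrt (Fintype.card V) * Real.sqrt (∑ v, z v ^ 2)
        ≤ Real.sqrt (Fintype.card V) * Ltwo f :=
      mul_le_mul_of_nonneg_left h5 (Real.sqrt_nonneg _)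
    linarith
  have hμlt : (μ:ℝ) < Real.sqrt (Fintype.card V) * Ltwo f := by
    have := hfge S₀
    linarith
  have hprodpos : 0 < Real.sqrt (Fintype.card V) * Ltwo f := lt_of_le_of_lt hμ0 hμlt
  have hsnR : 0 < Real.sqrt (Fintype.card V) := by
    rcases (Real.sqrt_nonneg (Fintype.card V : ℝ)).lt_or_eq with h | h
    · exact h
    · rw [← h] at hprodpos; linarith
  have hLpos : 0 < Ltwo f := by
    by_contra h
    push_neg at h
    nlinarith
  have hnRpos : (0:ℝ) < (Fintype.card V : ℝ) := Real.sqrt_pos.mp hsnR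
  have hcard : 0 < Fintype.card V := by exact_mod_cast hnRpos
  have hVne : (Finset.univ : Finset V).Nonempty := Finset.card_pos.mp (by
    rw [Finset.card_univ]; exact hcard)
  -- the enlargement
  have hgsub : IsSubmodular (muEnlargement f (μ:ℝ)) :=
    muEnlargement_submodular f hf h0 _ hμ0 hfV
  have hg0 : muEnlargement f (μ:ℝ) ∅ = 0 := by simp [muEnlargement]
  have hgU : muEnlargement f (μ:ℝ) Finset.univ = 0 := by simp [muEnlargement]
  have hgS₀ : muEnlargement f (μ:ℝ) S₀ = f S₀ + μ := by
    simp [muEnlargement, hS₀ne, hS₀nu]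
  have key : ∀ x ∈ basePolytope (muEnlargement f (μ:ℝ)), ∑ v ∈ S₀, x v ≤ -1 := by
    intro x hx
    have := hx.1 S₀
    rw [hgS₀] at this
    linarith
  -- B(f_μ) is nonempty
  obtain ⟨x₀, hx₀1, hx₀2, _⟩ := greedy_exists (muEnlargement f (μ:ℝ)) hgsub hg0
    (Finset.univ.card) Finset.univ ∅ rfl (Finset.empty_subset _)
  have hx₀ : x₀ ∈ basePolytope (muEnlargement f (μ:ℝ)) :=
    ⟨fun S => hx₀1 S (Finset.subset_univ S), hx₀2⟩
  have hx₀ne : x₀ ≠ 0 := by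
    intro h
    have := key x₀ hx₀
    rw [h] at this
    simp at this
    linarith
  -- the witness direction w
  set c : ℝ := (Real.sqrt (Fintype.card V))⁻¹ with hcdef
  have hcpos : 0 < c := inv_pos.mpr hsnR
  set w : V → ℝ := fun v => if v ∈ S₀ then -c else 0 with hwdef
  have hwsum : ∀ x : V → ℝ, ∑ v, w v * x v = -c * ∑ v ∈ S₀, x v := by
    intro x
    simp only [hwdef, ite_mul, zero_mul]
    rw [Finset.sum_ite_mem, Finset.univ_inter, ← Finset.mul_sum]
  have hxwsum : ∀ x : V → ℝ, ∑ v, x v * w v = -c * ∑ v ∈ S₀, x v := by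
    intro x
    rw [← hwsum x]
    exact Finset.sum_congr rfl fun v _ => mul_comm _ _
  have hwsq : ∑ v, w v ^ 2 ≤ 1 := by
    have e : ∀ v : V, w v ^ 2 = if v ∈ S₀ then c^2 else 0 := by
      intro v
      by_cases h : v ∈ S₀ <;> simp [hwdef, h]
    rw [Finset.sum_congr rfl (fun v _ => e v), Finset.sum_ite_mem, Finset.univ_inter,
      Finset.sum_const, nsmul_eq_mul]
    have hc2 : c^2 = ((Fintype.card V : ℝ))⁻¹ := by
      rw [hcdef, inv_pow, Real.sq_sqrt hnRpos.le]
    rw [hc2]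
    have hcard2 : (S₀.card : ℝ) ≤ (Fintype.card V : ℝ) := by
      exact_mod_cast Finset.card_le_univ S₀
    calc (S₀.card : ℝ) * ((Fintype.card V : ℝ))⁻¹
        ≤ (Fintype.card V : ℝ) * ((Fintype.card V : ℝ))⁻¹ := by
          apply mul_le_mul_of_nonneg_right hcard2 (by positivity)
      _ = 1 := mul_inv_cancel₀ (ne_of_gt hnRpos)
  have hwmem : w ∈ Fmu f (μ:ℝ) := by
    constructor
    · intro x hx
      rw [hwsum x]
      have h1 := key x hx
      nlinarith
    · exact hwsq
  -- width lower bound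
  have hwidth : ∀ x ∈ basePolytope (muEnlargement f (μ:ℝ)), c ≤ widthIn (Fmu f (μ:ℝ)) x := by
    intro x hx
    have hbdd : BddAbove {t : ℝ | ∃ z ∈ Fmu f (μ:ℝ), t = ∑ v, x v * z v} := by
      refine ⟨Real.sqrt (∑ v, x v ^ 2), ?_⟩
      rintro t ⟨z, hz, rfl⟩
      have h1 := cauchy_schwarz_sum x z
      have h2 : Real.sqrt (∑ v, z v ^ 2) ≤ 1 := Real.sqrt_le_one.mpr hz.2
      nlinarith [Real.sqrt_nonneg (∑ v, x v ^ 2)]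
    have hmem : (∑ v, x v * w v) ∈ {t : ℝ | ∃ z ∈ Fmu f (μ:ℝ), t = ∑ v, x v * z v} :=
      ⟨w, hwmem, rfl⟩
    have h2 : c ≤ ∑ v, x v * w v := by
      rw [hxwsum x]
      have := key x hx
      nlinarith
    exact h2.trans (le_csSup hbdd hmem)
  -- norm upper bound on B(f_μ)
  have hnormub : ∀ x ∈ basePolytope (muEnlargement f (μ:ℝ)),
      Real.sqrt (∑ v, x v ^ 2) ≤ 4 * Real.sqrt (Fintype.card V) * Ltwo f := by
    intro x hx
    set P : Finset V := Finset.univ.filter (fun v => 0 < x v) with hPdef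
    have hsum0 : ∑ v, x v = 0 := by rw [hx.2, hgU]
    have hsplit : ∑ v ∈ P, x v + ∑ v ∈ Finset.univ.filter (fun v => ¬ 0 < x v), x v = 0 := by
      rw [Finset.sum_filter_add_sum_filter_not]
      exact hsum0
    have habs : ∑ v, |x v| = 2 * ∑ v ∈ P, x v := by
      rw [← Finset.sum_filter_add_sum_filter_not Finset.univ (fun v => 0 < x v)
        (fun v => |x v|)]
      have e1 : ∑ v ∈ P, |x v| = ∑ v ∈ P, x v :=
        Finset.sum_congr rfl fun v hv => abs_of_pos (Finset.mem_filter.mp hv).2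
      have e2 : ∑ v ∈ Finset.univ.filter (fun v => ¬ 0 < x v), |x v|
          = -∑ v ∈ Finset.univ.filter (fun v => ¬ 0 < x v), x v := by
        rw [← Finset.sum_neg_distrib]
        exact Finset.sum_congr rfl fun v hv =>
          abs_of_nonpos (le_of_not_gt (Finset.mem_filter.mp hv).2)
      rw [e1, e2]
      linarith
    have hxS₀ := key x hx
    have hPne : P ≠ ∅ := by
      intro h
      have h1 : ∑ v ∈ P, x v = 0 := by rw [h]; simp
      have habs0 : ∑ v, |x v| = 0 := by rw [habs, h1]; ring
      have hall : ∀ v, x v = 0 := by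
        intro v
        exact abs_eq_zero.mp
          ((Finset.sum_eq_zero_iff_of_nonneg (fun i _ => abs_nonneg (x i))).mp habs0 v
            (Finset.mem_univ v))
      have h2 : ∑ v ∈ S₀, x v = 0 := Finset.sum_eq_zero fun v _ => hall v
      linarith
    have hPnu : P ≠ Finset.univ := by
      intro h
      have hpos : ∀ v ∈ Finset.univ, 0 < x v := by
        intro v _
        have : v ∈ P := h ▸ Finset.mem_univ v
        exact (Finset.mem_filter.mp this).2
      have := Finset.sum_pos hpos hVne
      linarith
    have hgP : muEnlargement f (μ:ℝ) P = f P + μ := by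
      simp [muEnlargement, hPne, hPnu]
    have h1 : ∑ v ∈ P, x v ≤ f P + μ := by
      have := hx.1 P
      rw [hgP] at this
      exact this
    have h2 := hfle P
    calc Real.sqrt (∑ v, x v ^ 2) ≤ ∑ v, |x v| := l2_le_l1 x
      _ = 2 * ∑ v ∈ P, x v := habs
      _ ≤ 2 * (f P + μ) := by linarith
      _ ≤ 4 * Real.sqrt (Fintype.card V) * Ltwo f := by linarith
  -- put everything together
  have hdenom1 : 0 < 4 * Real.sqrt (Fintype.card V) * Ltwo f := by positivity
  have hdenom2 : 0 < 4 * (Fintype.card V : ℝ) * Ltwo f := by positivity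
  have hEq : c / (4 * Real.sqrt (Fintype.card V) * Ltwo f)
      = 1 / (4 * (Fintype.card V : ℝ) * Ltwo f) := by
    rw [div_eq_div_iff hdenom1.ne' hdenom2.ne', hcdef]
    have hs : Real.sqrt (Fintype.card V) * Real.sqrt (Fintype.card V)
        = (Fintype.card V : ℝ) := Real.mul_self_sqrt hnRpos.le
    field_simp
    nlinarith [hs]
  rw [← hEq]
  unfold omegaMu
  apply le_csInf
  · exact ⟨_, x₀, hx₀, hx₀ne, rfl⟩
  · rintro t ⟨x, hx, hxne, rfl⟩
    have hxpos : 0 < Real.sqrt (∑ v, x v ^ 2) := by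
      apply Real.sqrt_pos.mpr
      obtain ⟨v, hv⟩ := Function.ne_iff.mp hxne
      have hv' : x v ≠ 0 := by simpa using hv
      exact Finset.sum_pos' (fun i _ => sq_nonneg _) ⟨v, Finset.mem_univ v, by positivity⟩
    exact div_le_div₀ (le_trans hcpos.le (hwidth x hx)) (hwidth x hx) hxpos (hnormub x hx)
end
end

section
/- Let V be a finite set with n = |V|, f : 2^V → ℝ a submodular function with f(∅) = 0 and f(V) ≤ 0, and F ⊆ 2^V a ring family containing ∅ and V that separates points. Then |ℓ⁻(V)|/n ≤ L₁(f↓) ≤ 2|ℓ⁻(V)|. -/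
open Finset

noncomputable section
open scoped Classical

variable {V : Type*} [Fintype V] [DecidableEq V]

/-- `F ⊆ 2^V` is a ring family containing `∅` and `V`:
closed under union and intersection. -/
def IsRingFamily (F : Set (Finset V)) : Prop :=
  ∅ ∈ F ∧ Finset.univ ∈ F ∧
    (∀ X ∈ F, ∀ Y ∈ F, X ∪ Y ∈ F) ∧ (∀ X ∈ F, ∀ Y ∈ F, X ∩ Y ∈ F)

/-- `F` separates points: for any distinct `u, v` some member of `F` contains
exactly one of them. -/
def SepPoints (F : Set (Finset V)) : Prop :=
  ∀ u v : V, u ≠ v → ∃ X ∈ F, (u ∈ X ∧ v ∉ X) ∨ (v ∈ X ∧ u ∉ X)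

/-- `M(v) = ⋃ {X ∈ F : v ∉ X}`, the largest member of `F` not containing `v`. -/
noncomputable def Mset (F : Set (Finset V)) (v : V) : Finset V :=
  Finset.univ.filter fun u => ∃ X ∈ F, v ∉ X ∧ u ∈ X

/-- `ℓ(v) = f(M(v) ∪ {v}) - f(M(v))`. -/
noncomputable def ell (f : Finset V → ℝ) (F : Set (Finset V)) (v : V) : ℝ :=
  f (insert v (Mset F v)) - f (Mset F v)

/-- `Down(X) = ⋂ {Y ∈ F : X ⊆ Y}`, the smallest member of `F` containing `X`. -/
noncomputable def DownSet (F : Set (Finset V)) (X : Finset V) : Finset V :=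
  Finset.univ.filter fun u => ∀ Y ∈ F, X ⊆ Y → u ∈ Y

/-- `f↓(X) = f(Down(X)) - ℓ⁻(Down(X) \ X)`. -/
noncomputable def fdown (f : Finset V → ℝ) (F : Set (Finset V)) (X : Finset V) : ℝ :=
  f (DownSet F X) - ∑ v ∈ DownSet F X \ X, min (ell f F v) 0

/-- `L₁(f) = max{‖z‖₁ : z ∈ B(f)}`. -/
noncomputable def Lone (f : Finset V → ℝ) : ℝ :=
  sSup {t : ℝ | ∃ x ∈ basePolytope f, t = ∑ v, |x v|}

/-! ### Auxiliary lemmas -/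

section Aux

variable {f : Finset V → ℝ} {F : Set (Finset V)}

lemma mem_Mset {u v : V} : u ∈ Mset F v ↔ ∃ X ∈ F, v ∉ X ∧ u ∈ X := by
  simp [Mset]

lemma not_mem_Mset_self {v : V} : v ∉ Mset F v := by
  simp only [mem_Mset, not_exists]
  rintro X ⟨_, hvX, hv⟩
  exact hvX hv

lemma subset_Mset {X : Finset V} (hX : X ∈ F) {v : V} (hv : v ∉ X) : X ⊆ Mset F v :=
  fun u hu => mem_Mset.2 ⟨X, hX, hv, hu⟩

lemma sup_mem_ring (hF : IsRingFamily F) :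
    ∀ T : Finset (Finset V), (∀ X ∈ T, X ∈ F) → T.sup id ∈ F := by
  intro T
  induction T using Finset.induction with
  | empty => intro _; simpa using hF.1
  | @insert X T hX ih =>
    intro hT
    rw [Finset.sup_insert]
    exact hF.2.2.1 _ (hT X (mem_insert_self _ _)) _ (ih fun Y hY => hT Y (mem_insert_of_mem hY))

lemma Mset_mem (hF : IsRingFamily F) (v : V) : Mset F v ∈ F := by
  have h : Mset F v = (Finset.univ.filter (fun X : Finset V => X ∈ F ∧ v ∉ X)).sup id := by
    ext u
    simp only [mem_Mset, Finset.mem_sup, Finset.mem_filter, Finset.mem_univ, true_and, id]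
    tauto
  rw [h]
  exact sup_mem_ring hF _ (fun X hX => (Finset.mem_filter.1 hX).2.1)

lemma mem_DownSet {u : V} {X : Finset V} : u ∈ DownSet F X ↔ ∀ Y ∈ F, X ⊆ Y → u ∈ Y := by
  simp [DownSet]

lemma subset_DownSet {X : Finset V} : X ⊆ DownSet F X :=
  fun u hu => mem_DownSet.2 fun Y _ hXY => hXY hu

lemma DownSet_subset {X Y : Finset V} (hY : Y ∈ F) (hXY : X ⊆ Y) : DownSet F X ⊆ Y :=
  fun u hu => mem_DownSet.1 hu Y hY hXY

lemma mem_inf_finsets {a : V} : ∀ T : Finset (Finset V), (a ∈ T.inf id ↔ ∀ Y ∈ T, a ∈ Y) := by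
  intro T
  induction T using Finset.induction with
  | empty => simp
  | @insert X T hX ih => simp [Finset.inf_insert, ih]

lemma inf_mem_ring (hF : IsRingFamily F) :
    ∀ T : Finset (Finset V), (∀ X ∈ T, X ∈ F) → T.inf id ∈ F := by
  intro T
  induction T using Finset.induction with
  | empty => intro _; simpa [Finset.top_eq_univ] using hF.2.1
  | @insert X T hX ih =>
    intro hT
    rw [Finset.inf_insert]
    exact hF.2.2.2 _ (hT X (mem_insert_self _ _)) _ (ih fun Y hY => hT Y (mem_insert_of_mem hY))

lemma DownSet_mem (hF : IsRingFamily F) (X : Finset V) : DownSet F X ∈ F := by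
  have h : DownSet F X = (Finset.univ.filter (fun Y : Finset V => Y ∈ F ∧ X ⊆ Y)).inf id := by
    ext u
    simp only [mem_DownSet, mem_inf_finsets, Finset.mem_filter, Finset.mem_univ, true_and, id]
    tauto
  rw [h]
  exact inf_mem_ring hF _ fun Y hY => (Finset.mem_filter.1 hY).2.1

lemma DownSet_of_mem {X : Finset V} (hX : X ∈ F) : DownSet F X = X :=
  subset_antisymm (DownSet_subset hX Subset.rfl) subset_DownSet

lemma DownSet_mono {X Y : Finset V} (h : X ⊆ Y) : DownSet F X ⊆ DownSet F Y :=
  fun u hu => mem_DownSet.2 fun Z hZ hYZ => mem_DownSet.1 hu Z hZ (h.trans hYZ)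

lemma DownSet_union (hF : IsRingFamily F) (X Y : Finset V) :
    DownSet F (X ∪ Y) = DownSet F X ∪ DownSet F Y := by
  apply subset_antisymm
  · exact DownSet_subset (hF.2.2.1 _ (DownSet_mem hF X) _ (DownSet_mem hF Y))
      (union_subset_union subset_DownSet subset_DownSet)
  · exact union_subset (DownSet_mono subset_union_left) (DownSet_mono subset_union_right)

lemma marginal_le (hf : IsSubmodular f) {S T : Finset V} (hTS : T ⊆ S) {v : V} (hv : v ∉ S) :
    f (insert v S) - f S ≤ f (insert v T) - f T := by
  have h := hf S (insert v T)
  have h1 : S ∩ insert v T = T := by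
    ext u
    simp only [mem_inter, mem_insert]
    constructor
    · rintro ⟨hS, rfl | hu⟩
      · exact absurd hS hv
      · exact hu
    · intro hu; exact ⟨hTS hu, Or.inr hu⟩
  have h2 : S ∪ insert v T = insert v S := by
    rw [Finset.union_insert, Finset.union_eq_left.mpr hTS]
  rw [h1, h2] at h
  linarith

lemma ell_le_marginal (hf : IsSubmodular f) {Z : Finset V} (hZ : Z ∈ F) {u : V} (hu : u ∉ Z) :
    ell f F u ≤ f (insert u Z) - f Z :=
  marginal_le hf (subset_Mset hZ hu) not_mem_Mset_self

lemma exists_step (hF : IsRingFamily F) (hsep : SepPoints F) {A B : Finset V}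
    (hA : A ∈ F) (hB : B ∈ F) (hAB : A ⊆ B) (hne : A ≠ B) :
    ∃ Z ∈ F, A ⊆ Z ∧ ∃ u ∈ B, u ∉ Z ∧ B = insert u Z := by
  set P := Finset.univ.filter (fun Z : Finset V => Z ∈ F ∧ A ⊆ Z ∧ Z ⊆ B ∧ Z ≠ B) with hP
  have hPA : A ∈ P := by
    simp only [hP, Finset.mem_filter, Finset.mem_univ, true_and]
    exact ⟨hA, Subset.rfl, hAB, hne⟩
  obtain ⟨Z, hZP, hZmax⟩ := P.exists_max_image (fun Z => Z.card) ⟨A, hPA⟩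
  simp only [hP, Finset.mem_filter, Finset.mem_univ, true_and] at hZP
  obtain ⟨hZF, hAZ, hZB, hZne⟩ := hZP
  obtain ⟨u, hu⟩ : (B \ Z).Nonempty := by
    rw [Finset.sdiff_nonempty]
    intro h
    exact hZne (subset_antisymm hZB h)
  rw [Finset.mem_sdiff] at hu
  refine ⟨Z, hZF, hAZ, u, hu.1, hu.2, ?_⟩
  apply subset_antisymm ?_ ?_
  swap
  · intro w hw
    rcases mem_insert.1 hw with rfl | hw
    exacts [hu.1, hZB hw]
  intro w hwB
  by_contra hw
  simp only [mem_insert, not_or] at hw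
  obtain ⟨hwu, hwZ⟩ := hw
  have main : ∀ a b : V, a ∈ B → b ∈ B → a ∉ Z → b ∉ Z → ∀ X, X ∈ F → a ∈ X → b ∉ X → False := by
    intro a b haB hbB haZ hbZ X hXF haX hbX
    have hZ'F : Z ∪ (X ∩ B) ∈ F := hF.2.2.1 _ hZF _ (hF.2.2.2 _ hXF _ hB)
    have hZ'P : Z ∪ (X ∩ B) ∈ P := by
      simp only [hP, Finset.mem_filter, Finset.mem_univ, true_and]
      refine ⟨hZ'F, hAZ.trans Finset.subset_union_left,
        Finset.union_subset hZB Finset.inter_subset_right, ?_⟩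
      intro h
      have hb : b ∈ Z ∪ (X ∩ B) := by rw [h]; exact hbB
      rcases mem_union.1 hb with h' | h'
      · exact hbZ h'
      · exact hbX (mem_inter.1 h').1
    have hlt : Z.card < (Z ∪ (X ∩ B)).card := by
      apply Finset.card_lt_card
      rw [Finset.ssubset_iff_of_subset Finset.subset_union_left]
      exact ⟨a, Finset.mem_union_right _ (Finset.mem_inter.2 ⟨haX, haB⟩), haZ⟩
    exact absurd (hZmax _ hZ'P) (not_le.2 hlt)
  obtain ⟨X, hXF, hcase⟩ := hsep u w (fun h => hwu h.symm)
  rcases hcase with ⟨huX, hwX⟩ | ⟨hwX, huX⟩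
  · exact main u w hu.1 hwB hu.2 hwZ X hXF huX hwX
  · exact main w u hwB hu.1 hwZ hu.2 X hXF hwX huX

lemma ring_chain (hf : IsSubmodular f) (hF : IsRingFamily F) (hsep : SepPoints F) :
    ∀ n : ℕ, ∀ A B : Finset V, A ∈ F → B ∈ F → A ⊆ B → (B \ A).card = n →
      f A + ∑ u ∈ B \ A, min (ell f F u) 0 ≤ f B := by
  intro n
  induction n with
  | zero =>
    intro A B hA hB hAB hcard
    have h : B \ A = ∅ := Finset.card_eq_zero.1 hcard
    have hAB' : A = B := subset_antisymm hAB (Finset.sdiff_eq_empty_iff_subset.1 h)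
    rw [h, Finset.sum_empty, add_zero, hAB']
  | succ n ih =>
    intro A B hA hB hAB hcard
    have hne : A ≠ B := by
      intro h
      rw [h, Finset.sdiff_self, Finset.card_empty] at hcard
      omega
    obtain ⟨Z, hZF, hAZ, u, huB, huZ, hBZ⟩ := exists_step hF hsep hA hB hAB hne
    have huA : u ∉ A := fun h => huZ (hAZ h)
    have hZB : Z ⊆ B := by rw [hBZ]; exact subset_insert _ _
    have hdiff : B \ A = insert u (Z \ A) := by
      rw [hBZ]
      ext w
      simp only [Finset.mem_sdiff, Finset.mem_insert]
      constructor
      · rintro ⟨rfl | hw, hwA⟩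
        · exact Or.inl rfl
        · exact Or.inr ⟨hw, hwA⟩
      · rintro (rfl | ⟨hw, hwA⟩)
        · exact ⟨Or.inl rfl, huA⟩
        · exact ⟨Or.inr hw, hwA⟩
    have huZA : u ∉ Z \ A := fun h => huZ (Finset.mem_sdiff.1 h).1
    have hcard' : (Z \ A).card = n := by
      rw [hdiff, Finset.card_insert_of_notMem huZA] at hcard
      omega
    have hih := ih A Z hA hZF hAZ hcard'
    have hstep : ell f F u ≤ f (insert u Z) - f Z := ell_le_marginal hf hZF huZ
    have hmin : min (ell f F u) 0 ≤ ell f F u := min_le_left _ _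
    have hsum : ∑ w ∈ B \ A, min (ell f F w) 0
        = min (ell f F u) 0 + ∑ w ∈ Z \ A, min (ell f F w) 0 := by
      rw [hdiff, Finset.sum_insert huZA]
    rw [hsum, hBZ]
    linarith

lemma ring_mono (hf : IsSubmodular f) (hF : IsRingFamily F) (hsep : SepPoints F)
    {A B : Finset V} (hA : A ∈ F) (hB : B ∈ F) (hAB : A ⊆ B) :
    f A + ∑ u ∈ B \ A, min (ell f F u) 0 ≤ f B :=
  ring_chain hf hF hsep (B \ A).card A B hA hB hAB rfl

lemma fdown_of_mem (hF : IsRingFamily F) {X : Finset V} (hX : X ∈ F) : fdown f F X = f X := by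
  unfold fdown
  rw [DownSet_of_mem hX, Finset.sdiff_self, Finset.sum_empty, sub_zero]

lemma fdown_eq (X : Finset V) :
    fdown f F X = (f (DownSet F X) - ∑ u ∈ DownSet F X, min (ell f F u) 0)
      + ∑ u ∈ X, min (ell f F u) 0 := by
  unfold fdown
  rw [Finset.sum_sdiff_eq_sub subset_DownSet]
  ring

lemma gmono (hf : IsSubmodular f) (hF : IsRingFamily F) (hsep : SepPoints F)
    {A B : Finset V} (hA : A ∈ F) (hB : B ∈ F) (hAB : A ⊆ B) :
    f A - ∑ u ∈ A, min (ell f F u) 0 ≤ f B - ∑ u ∈ B, min (ell f F u) 0 := by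
  have h := ring_mono hf hF hsep hA hB hAB
  have hs : ∑ u ∈ B \ A, min (ell f F u) 0
      = ∑ u ∈ B, min (ell f F u) 0 - ∑ u ∈ A, min (ell f F u) 0 :=
    Finset.sum_sdiff_eq_sub hAB
  linarith

lemma fdown_submodular (hf : IsSubmodular f) (hF : IsRingFamily F) (hsep : SepPoints F) :
    IsSubmodular (fdown f F) := by
  intro X Y
  have hDX := DownSet_mem hF X
  have hDY := DownSet_mem hF Y
  have hsub : f (DownSet F X ∩ DownSet F Y) + f (DownSet F X ∪ DownSet F Y)
      ≤ f (DownSet F X) + f (DownSet F Y) := hf _ _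
  have hmod2 : (∑ u ∈ DownSet F X ∪ DownSet F Y, min (ell f F u) 0)
      + ∑ u ∈ DownSet F X ∩ DownSet F Y, min (ell f F u) 0
      = (∑ u ∈ DownSet F X, min (ell f F u) 0) + ∑ u ∈ DownSet F Y, min (ell f F u) 0 :=
    Finset.sum_union_inter
  have hmod1 : (∑ u ∈ X ∪ Y, min (ell f F u) 0) + ∑ u ∈ X ∩ Y, min (ell f F u) 0
      = (∑ u ∈ X, min (ell f F u) 0) + ∑ u ∈ Y, min (ell f F u) 0 :=
    Finset.sum_union_inter
  have hmono : f (DownSet F (X ∩ Y)) - ∑ u ∈ DownSet F (X ∩ Y), min (ell f F u) 0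
      ≤ f (DownSet F X ∩ DownSet F Y) - ∑ u ∈ DownSet F X ∩ DownSet F Y, min (ell f F u) 0 :=
    gmono hf hF hsep (DownSet_mem hF _) (hF.2.2.2 _ hDX _ hDY)
      (Finset.subset_inter (DownSet_mono inter_subset_left) (DownSet_mono inter_subset_right))
  rw [fdown_eq (X ∩ Y), fdown_eq (X ∪ Y), fdown_eq X, fdown_eq Y, DownSet_union hF X Y]
  linarith

lemma insert_Mset_mem (hF : IsRingFamily F) (hsep : SepPoints F) (v : V) :
    insert v (Mset F v) ∈ F := by
  have hD : DownSet F (insert v (Mset F v)) = insert v (Mset F v) := by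
    apply subset_antisymm _ subset_DownSet
    intro u hu
    by_contra hnot
    simp only [mem_insert, not_or] at hnot
    obtain ⟨huv, huM⟩ := hnot
    have hvMu : v ∈ Mset F u := by
      obtain ⟨X, hXF, hcase⟩ := hsep u v huv
      rcases hcase with ⟨huX, hvX⟩ | ⟨hvX, huX⟩
      · exact absurd (subset_Mset hXF hvX huX) huM
      · exact subset_Mset hXF huX hvX
    have hY : Mset F u ∪ Mset F v ∈ F := hF.2.2.1 _ (Mset_mem hF u) _ (Mset_mem hF v)
    have hsubY : insert v (Mset F v) ⊆ Mset F u ∪ Mset F v := by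
      intro w hw
      rcases mem_insert.1 hw with rfl | hw
      exacts [mem_union_left _ hvMu, mem_union_right _ hw]
    have hmem : u ∈ Mset F u ∪ Mset F v := mem_DownSet.1 hu _ hY hsubY
    rcases mem_union.1 hmem with h | h
    exacts [not_mem_Mset_self h, huM h]
  rw [← hD]
  exact DownSet_mem hF _

lemma fdown_top_marginal (hf : IsSubmodular f) (hF : IsRingFamily F) (v : V) :
    min (ell f F v) 0 ≤ fdown f F Finset.univ - fdown f F (Finset.univ.erase v) := by
  have hsub : Finset.univ.erase v ⊆ DownSet F (Finset.univ.erase v) := subset_DownSet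
  have hDF : DownSet F (Finset.univ.erase v) ∈ F := DownSet_mem hF _
  rw [fdown_of_mem hF hF.2.1]
  by_cases hvD : v ∈ DownSet F (Finset.univ.erase v)
  · have hDuniv : DownSet F (Finset.univ.erase v) = Finset.univ := by
      apply Finset.eq_univ_of_forall
      intro u
      by_cases h : u = v
      · exact h ▸ hvD
      · exact hsub (Finset.mem_erase.2 ⟨h, mem_univ u⟩)
    have hd : DownSet F (Finset.univ.erase v) \ Finset.univ.erase v = {v} := by
      rw [hDuniv]
      ext u
      simp only [Finset.mem_sdiff, Finset.mem_erase, Finset.mem_univ, true_and, and_true,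
        Finset.mem_singleton, not_and, not_ne_iff]
    unfold fdown
    rw [hd, Finset.sum_singleton, hDuniv]
    linarith [le_refl (min (ell f F v) 0)]
  · have hDeq : DownSet F (Finset.univ.erase v) = Finset.univ.erase v :=
      subset_antisymm (fun u hu => Finset.mem_erase.2 ⟨fun h => hvD (by rw [h] at hu; exact hu), mem_univ u⟩) hsub
    have hM : Mset F v = Finset.univ.erase v := by
      apply subset_antisymm
      · intro u hu
        exact Finset.mem_erase.2 ⟨fun h => not_mem_Mset_self (h ▸ hu), mem_univ u⟩
      · rw [← hDeq]
        exact subset_Mset hDF hvD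
    rw [fdown_of_mem hF (hDeq ▸ hDF)]
    have hell : ell f F v = f Finset.univ - f (Finset.univ.erase v) := by
      unfold ell
      rw [hM, Finset.insert_erase (mem_univ v)]
    rw [← hell]
    exact min_le_left _ _

lemma greedy_mem (g : Finset V → ℝ) (hg : IsSubmodular g) (hg0 : g ∅ = 0) (r : V → ℕ)
    (hr : Function.Injective r) :
    (fun v => g (insert v (Finset.univ.filter fun u => r u < r v))
      - g (Finset.univ.filter fun u => r u < r v)) ∈ basePolytope g := by
  set x : V → ℝ := fun v => g (insert v (Finset.univ.filter fun u => r u < r v))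
      - g (Finset.univ.filter fun u => r u < r v) with hx
  have key : ∀ n : ℕ, ∀ S : Finset V, S.card = n → ∑ v ∈ S, x v ≤ g S := by
    intro n
    induction n with
    | zero =>
      intro S hS
      rw [Finset.card_eq_zero.1 hS, Finset.sum_empty, hg0]
    | succ n ih =>
      intro S hS
      have hne : S.Nonempty := by
        rw [← Finset.card_pos, hS]; omega
      obtain ⟨mx, hmxS, hmax⟩ := S.exists_max_image r hne
      have hsub : S.erase mx ⊆ Finset.univ.filter (fun u => r u < r mx) := by
        intro u hu
        rw [Finset.mem_erase] at hu
        simp only [Finset.mem_filter, Finset.mem_univ, true_and]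
        exact lt_of_le_of_ne (hmax u hu.2) (fun h => hu.1 (hr h))
      have hmxpred : mx ∉ Finset.univ.filter (fun u => r u < r mx) := by
        simp
      have h := hg (Finset.univ.filter (fun u => r u < r mx)) S
      have h1 : Finset.univ.filter (fun u => r u < r mx) ∩ S = S.erase mx := by
        ext u
        simp only [Finset.mem_inter, Finset.mem_erase]
        constructor
        · rintro ⟨hu1, hu2⟩
          refine ⟨fun h' => ?_, hu2⟩
          subst h'
          exact hmxpred hu1
        · rintro ⟨hu1, hu2⟩
          exact ⟨hsub (Finset.mem_erase.2 ⟨hu1, hu2⟩), hu2⟩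
      have h2 : Finset.univ.filter (fun u => r u < r mx) ∪ S
          = insert mx (Finset.univ.filter (fun u => r u < r mx)) := by
        ext u
        simp only [Finset.mem_union, Finset.mem_insert]
        constructor
        · rintro (hu | hu)
          · exact Or.inr hu
          · by_cases h' : u = mx
            · exact Or.inl h'
            · exact Or.inr (hsub (Finset.mem_erase.2 ⟨h', hu⟩))
        · rintro (rfl | hu)
          · exact Or.inr hmxS
          · exact Or.inl hu
      rw [h1, h2] at h
      have hstep : x mx ≤ g S - g (S.erase mx) := by
        rw [hx]
        dsimp only
        linarith
      have hcard : (S.erase mx).card = n := by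
        rw [Finset.card_erase_of_mem hmxS, hS]
        omega
      have hsum : ∑ v ∈ S, x v = x mx + ∑ v ∈ S.erase mx, x v := by
        rw [Finset.add_sum_erase _ _ hmxS]
      rw [hsum]
      have := ih (S.erase mx) hcard
      linarith
  have tele : ∀ k : ℕ,
      ∑ v ∈ Finset.univ.filter (fun u => r u < k), x v
        = g (Finset.univ.filter (fun u => r u < k)) := by
    intro k
    induction k with
    | zero => simp [hg0]
    | succ k ih =>
      by_cases h : ∃ v, r v = k
      · obtain ⟨v, rfl⟩ := h
        have hv : v ∉ Finset.univ.filter (fun u => r u < r v) := by simp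
        have hins : Finset.univ.filter (fun u => r u < r v + 1)
            = insert v (Finset.univ.filter (fun u => r u < r v)) := by
          ext u
          simp only [Finset.mem_filter, Finset.mem_univ, true_and, Finset.mem_insert]
          constructor
          · intro hu
            rcases Nat.lt_succ_iff_lt_or_eq.1 hu with h' | h'
            · exact Or.inr h'
            · exact Or.inl (hr h')
          · rintro (rfl | hu) <;> omega
        rw [hins, Finset.sum_insert hv, ih, hx]
        dsimp only
        ring
      · push_neg at h
        have heq : Finset.univ.filter (fun u => r u < k + 1)
            = Finset.univ.filter (fun u => r u < k) := by
          ext u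
          simp only [Finset.mem_filter, Finset.mem_univ, true_and]
          have := h u
          omega
        rw [heq]
        exact ih
  constructor
  · intro S
    exact key S.card S rfl
  · have hK : (Finset.univ : Finset V) = Finset.univ.filter (fun u => r u < Finset.univ.sup r + 1) := by
      ext u
      simp only [Finset.mem_filter, Finset.mem_univ, true_and]
      exact iff_of_true trivial (Nat.lt_add_one_iff.mpr (Finset.le_sup (mem_univ u)))
    conv_lhs => rw [hK]
    conv_rhs => rw [hK]
    exact tele _

end Aux

/-- If `f(V) ≤ 0`, then `|ℓ⁻(V)|/n ≤ L₁(f↓) ≤ 2 |ℓ⁻(V)|`. -/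
theorem Lone_fdown_bounds (f : Finset V → ℝ) (hf : IsSubmodular f) (h0 : f ∅ = 0)
    (hfV : f Finset.univ ≤ 0)
    (F : Set (Finset V)) (hF : IsRingFamily F) (hsep : SepPoints F) :
    |∑ v, min (ell f F v) 0| / (Fintype.card V : ℝ) ≤ Lone (fdown f F) ∧
    Lone (fdown f F) ≤ 2 * |∑ v, min (ell f F v) 0| := by
  have hm0 : ∀ v : V, min (ell f F v) 0 ≤ 0 := fun v => min_le_right _ _
  have hsum0 : ∑ v, min (ell f F v) 0 ≤ 0 :=
    Finset.sum_nonpos (fun v _ => hm0 v)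
  have habs : |∑ v, min (ell f F v) 0| = -∑ v, min (ell f F v) 0 := abs_of_nonpos hsum0
  have hub : ∀ t ∈ {t : ℝ | ∃ x ∈ basePolytope (fdown f F), t = ∑ v, |x v|},
      t ≤ 2 * |∑ v, min (ell f F v) 0| := by
    rintro t ⟨x, ⟨hx1, hx2⟩, rfl⟩
    have hxv : ∀ v, min (ell f F v) 0 ≤ x v := by
      intro v
      have h1 : ∑ u ∈ Finset.univ.erase v, x u ≤ fdown f F (Finset.univ.erase v) := hx1 _
      have hxeq : x v + ∑ u ∈ Finset.univ.erase v, x u = ∑ u, x u := by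
        rw [Finset.add_sum_erase _ _ (mem_univ v)]
      have hkey := fdown_top_marginal hf hF v (f := f)
      rw [hx2] at hxeq
      linarith
    have hptw : ∀ v, |x v| ≤ x v - 2 * min (ell f F v) 0 := by
      intro v
      have h1 : min (ell f F v) 0 ≤ min (x v) 0 := le_min (hxv v) (hm0 v)
      have h2 : |x v| = x v - 2 * min (x v) 0 := by
        rcases le_total (x v) 0 with h | h
        · rw [abs_of_nonpos h, min_eq_left h]; ring
        · rw [abs_of_nonneg h, min_eq_right h]; ring
      linarith
    calc ∑ v, |x v| ≤ ∑ v, (x v - 2 * min (ell f F v) 0) :=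
          Finset.sum_le_sum (fun v _ => hptw v)
      _ = (∑ v, x v) - 2 * ∑ v, min (ell f F v) 0 := by
          rw [Finset.sum_sub_distrib, Finset.mul_sum]
      _ ≤ 0 - 2 * ∑ v, min (ell f F v) 0 := by
          rw [hx2, fdown_of_mem hF hF.2.1]
          linarith
      _ = 2 * |∑ v, min (ell f F v) 0| := by rw [habs]; ring
  have hbdd : BddAbove {t : ℝ | ∃ x ∈ basePolytope (fdown f F), t = ∑ v, |x v|} :=
    ⟨2 * |∑ v, min (ell f F v) 0|, fun t ht => hub t ht⟩
  refine ⟨?_, Real.sSup_le hub (by positivity)⟩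
  rcases isEmpty_or_nonempty V with hV | hV
  · have hc : (Fintype.card V : ℝ) = 0 := by
      simp [Fintype.card_eq_zero]
    rw [hc, div_zero]
    exact Real.sSup_nonneg (by rintro t ⟨x, _, rfl⟩; positivity)
  · obtain ⟨v₀, -, hv₀⟩ := Finset.exists_min_image Finset.univ (fun v => min (ell f F v) 0)
      Finset.univ_nonempty
    have hcardpos : (0 : ℝ) < (Fintype.card V : ℝ) := by
      exact_mod_cast Fintype.card_pos
    have havg : |∑ v, min (ell f F v) 0| / (Fintype.card V : ℝ) ≤ -min (ell f F v₀) 0 := by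
      rw [habs, div_le_iff₀ hcardpos]
      have hsumlb : (Fintype.card V : ℝ) * min (ell f F v₀) 0 ≤ ∑ v, min (ell f F v) 0 := by
        have := Finset.card_nsmul_le_sum Finset.univ (fun v => min (ell f F v) 0)
          (min (ell f F v₀) 0) (fun v _ => hv₀ v (mem_univ v))
        simpa [nsmul_eq_mul, Finset.card_univ] using this
      nlinarith
    set e := Fintype.equivFin V with he
    set n := Fintype.card V with hn
    set M0 := Mset F v₀ with hM0
    set r : V → ℕ := fun u => if u ∈ M0 then (e u : ℕ) else if u = v₀ then n else n + 1 + (e u : ℕ)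
      with hrdef
    have hebnd : ∀ u : V, (e u : ℕ) < n := fun u => (e u).2
    have heinj : ∀ u w : V, (e u : ℕ) = (e w : ℕ) → u = w := by
      intro u w h
      exact e.injective (Fin.val_injective h)
    have hrval : ∀ u : V, (u ∈ M0 ∧ r u = (e u : ℕ)) ∨ (u = v₀ ∧ r u = n)
        ∨ (u ∉ M0 ∧ u ≠ v₀ ∧ r u = n + 1 + (e u : ℕ)) := by
      intro u
      by_cases h1 : u ∈ M0
      · left; exact ⟨h1, by simp [hrdef, h1]⟩
      · by_cases h2 : u = v₀
        · right; left
          refine ⟨h2, ?_⟩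
          subst h2
          simp [hrdef, h1]
        · right; right; exact ⟨h1, h2, by simp [hrdef, h1, h2]⟩
    have hrv₀ : r v₀ = n := by
      rcases hrval v₀ with ⟨h1, -⟩ | ⟨-, h2⟩ | ⟨-, h1', -⟩
      · exact absurd h1 not_mem_Mset_self
      · exact h2
      · exact absurd rfl h1'
    have hr : Function.Injective r := by
      intro u w huw
      rcases hrval u with ⟨hu1, hu2⟩ | ⟨hu1, hu2⟩ | ⟨hu1, hu1', hu2⟩ <;>
        rcases hrval w with ⟨hw1, hw2⟩ | ⟨hw1, hw2⟩ | ⟨hw1, hw1', hw2⟩ <;>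
        first
          | (exact heinj u w (by omega))
          | (exact hu1.trans hw1.symm)
          | (exfalso; have := hebnd u; have := hebnd w; omega)
    have hpred : Finset.univ.filter (fun u => r u < r v₀) = M0 := by
      ext u
      simp only [Finset.mem_filter, Finset.mem_univ, true_and, hrv₀]
      constructor
      · intro hu
        rcases hrval u with ⟨h1, -⟩ | ⟨h1, h2⟩ | ⟨h1, h1', h2⟩
        · exact h1
        · omega
        · omega
      · intro hu
        rcases hrval u with ⟨-, h2⟩ | ⟨h1, -⟩ | ⟨h1, -, -⟩
        · rw [h2]; exact hebnd u
        · rw [h1] at hu; exact absurd hu not_mem_Mset_self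
        · exact absurd hu h1
    set x : V → ℝ := fun v => fdown f F (insert v (Finset.univ.filter fun u => r u < r v))
      - fdown f F (Finset.univ.filter fun u => r u < r v) with hxdef
    have hxB : x ∈ basePolytope (fdown f F) := by
      apply greedy_mem (fdown f F) (fdown_submodular hf hF hsep)
        (by rw [fdown_of_mem hF hF.1]; exact h0) r hr
    have hxv₀ : x v₀ = ell f F v₀ := by
      rw [hxdef]
      dsimp only
      rw [hpred, fdown_of_mem hF (insert_Mset_mem hF hsep v₀), fdown_of_mem hF (Mset_mem hF v₀)]
      rfl
    have hmem : (∑ v, |x v|) ∈ {t : ℝ | ∃ x ∈ basePolytope (fdown f F), t = ∑ v, |x v|} :=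
      ⟨x, hxB, rfl⟩
    have h1 : |x v₀| ≤ ∑ v, |x v| :=
      Finset.single_le_sum (f := fun v => |x v|) (fun v _ => abs_nonneg _) (mem_univ v₀)
    have h2 : -min (ell f F v₀) 0 ≤ |x v₀| := by
      rw [hxv₀]
      rcases le_total (ell f F v₀) 0 with h | h
      · rw [min_eq_left h, abs_of_nonpos h]
      · rw [min_eq_right h]
        simp [abs_nonneg]
    calc |∑ v, min (ell f F v) 0| / (Fintype.card V : ℝ) ≤ -min (ell f F v₀) 0 := havg
      _ ≤ ∑ v, |x v| := le_trans h2 h1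
      _ ≤ Lone (fdown f F) := le_csSup hbdd hmem
end
end

section
/- Let V be a finite set, f : 2^V → ℝ a submodular function with f(∅) = 0, μ ≥ max{0, −f(V)}, and W ⊆ V a set with f(W) = −μ. Let h ≥ 1 and, for each i = 1, …, h, let μ_i satisfy max{0, −f(V)} ≤ μ_i ≤ μ, let σ_i be an ordering of V, let g_i be the greedy vertex of B(f_{μ_i}) with respect to σ_i, and let ḡ_i be the greedy vertex of B(f) with respect to the same ordering σ_i. Let λ ∈ ℝ^h with λ ≥ 0 and ∑_{i=1}^h λ_i = 1, and set v := ∑_{i=1}^h λ_i g_i and y := ∑_{i=1}^h λ_i ḡ_i. Then y ∈ B(f) and f(W) ≤ y⁻(V) + ‖v‖₁/2. -/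
open Finset

noncomputable section
open scoped Classical

variable {V : Type*} [Fintype V] [DecidableEq V]

/-- The greedy vertex of `B(g)` associated with the ordering `σ` of `V`:
`x(v) = g({v₁, …, v_i}) - g({v₁, …, v_{i-1}})` where `v = v_i`. -/
noncomputable def greedyVertex (g : Finset V → ℝ)
    (σ : Fin (Fintype.card V) ≃ V) : V → ℝ :=
  fun v =>
    g ((Finset.univ.filter fun k => k ≤ σ.symm v).image σ) -
    g ((Finset.univ.filter fun k => k < σ.symm v).image σ)

/-!
Every greedy vertex of `B(f)` lies in `B(f)`, hence so does the convex combination `y`.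
For the bound, put `dᵢ = ḡᵢ - gᵢ`. Along `σᵢ`, `dᵢ` vanishes except at the first element,
where it is `-μᵢ` (or `f(V)` if `n = 1`), and at the last one, where it is `f(V) + μᵢ ≥ 0`;
so `dᵢ⁻(V) ≥ -μᵢ ≥ -μ`. As `x ↦ x⁻(V)` is superadditive and positively homogeneous,
`y⁻(V) = (v + ∑ λᵢ dᵢ)⁻(V) ≥ v⁻(V) - μ`, and `v(V) = 0` turns `v⁻(V)` into `-‖v‖₁/2`.
-/

omit [Fintype V] in
theorem IsSubmodular.marginal_antitone {f : Finset V → ℝ} (hf : IsSubmodular f)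
    {X Y : Finset V} {a : V} (hXY : X ⊆ Y) (ha : a ∉ Y) :
    f (insert a Y) - f Y ≤ f (insert a X) - f X := by
  have h := hf (insert a X) Y
  rw [insert_inter_of_notMem ha, inter_eq_left.2 hXY, insert_union,
    union_eq_right.2 hXY] at h
  linarith

omit [DecidableEq V] in
theorem convex_basePolytope (f : Finset V → ℝ) : Convex ℝ (basePolytope f) := by
  rintro x ⟨hxS, hxV⟩ y ⟨hyS, hyV⟩ a b ha hb hab
  have sum_comb : ∀ S : Finset V, ∑ v ∈ S, (a • x + b • y) v
      = a * ∑ v ∈ S, x v + b * ∑ v ∈ S, y v := fun S => by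
    simp only [Pi.add_apply, Pi.smul_apply, smul_eq_mul, sum_add_distrib, mul_sum]
  refine ⟨fun S => ?_, ?_⟩
  · calc ∑ v ∈ S, (a • x + b • y) v ≤ a * f S + b * f S := by
          rw [sum_comb]
          exact add_le_add (mul_le_mul_of_nonneg_left (hxS S) ha)
            (mul_le_mul_of_nonneg_left (hyS S) hb)
      _ = f S := by rw [← add_mul, hab, one_mul]
  · rw [sum_comb, hxV, hyV, ← add_mul, hab, one_mul]

theorem sum_min_zero_eq_neg_half_sum_abs {ι : Type*} [Fintype ι] {x : ι → ℝ}
    (hx : ∑ i, x i = 0) : ∑ i, min (x i) 0 = -((∑ i, |x i|) / 2) := by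
  have min_eq (a : ℝ) : min a 0 = (a - |a|) / 2 := by
    rcases le_total 0 a with ha | ha
    · rw [min_eq_right ha, abs_of_nonneg ha]; ring
    · rw [min_eq_left ha, abs_of_nonpos ha]; ring
  simp only [min_eq, ← sum_div, sum_sub_distrib, hx]
  ring

theorem sum_min_zero_add_le {ι : Type*} [Fintype ι] (x y : ι → ℝ) :
    ∑ i, min (x i) 0 + ∑ i, min (y i) 0 ≤ ∑ i, min (x i + y i) 0 := by
  rw [← sum_add_distrib]
  refine sum_le_sum fun i _ => le_min ?_ ?_
  · linarith [min_le_left (x i) 0, min_le_left (y i) 0]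
  · linarith [min_le_right (x i) 0, min_le_right (y i) 0]

theorem sum_mul_sum_min_zero_le {ι κ : Type*} [Fintype ι] [Fintype κ] {c : κ → ℝ}
    (hc : ∀ k, 0 ≤ c k) (x : κ → ι → ℝ) :
    ∑ k, c k * ∑ i, min (x k i) 0 ≤ ∑ i, min (∑ k, c k * x k i) 0 := by
  simp only [mul_sum]
  rw [sum_comm]
  refine sum_le_sum fun i _ => le_min ?_ ?_
  · exact sum_le_sum fun k _ => mul_le_mul_of_nonneg_left (min_le_left _ _) (hc k)
  · exact sum_nonpos fun k _ => mul_nonpos_of_nonneg_of_nonpos (hc k) (min_le_right _ _)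

def initialSegment (σ : Fin (Fintype.card V) ≃ V) (j : ℕ) : Finset V :=
  univ.filter fun w => (σ.symm w : ℕ) < j

section initialSegment

variable (σ : Fin (Fintype.card V) ≃ V)

omit [DecidableEq V] in
theorem mem_initialSegment {j : ℕ} {w : V} : w ∈ initialSegment σ j ↔ (σ.symm w : ℕ) < j := by
  simp [initialSegment]

omit [DecidableEq V] in
theorem initialSegment_zero : initialSegment σ 0 = ∅ := by
  ext w; simp [mem_initialSegment]

omit [DecidableEq V] in
theorem initialSegment_card : initialSegment σ (Fintype.card V) = univ := by
  ext w; simp [mem_initialSegment]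

theorem initialSegment_succ {j : ℕ} (hj : j < Fintype.card V) :
    initialSegment σ (j + 1) = insert (σ ⟨j, hj⟩) (initialSegment σ j) := by
  ext w
  simp only [mem_initialSegment, mem_insert, Nat.lt_succ_iff_lt_or_eq,
    ← Equiv.symm_apply_eq, Fin.ext_iff]
  tauto

theorem greedyVertex_apply (g : Finset V → ℝ) (w : V) :
    greedyVertex g σ w
      = g (initialSegment σ (σ.symm w + 1)) - g (initialSegment σ (σ.symm w)) := by
  have image_eq (p : Fin (Fintype.card V) → Prop) [DecidablePred p] :
      (univ.filter p).image σ = univ.filter fun w => p (σ.symm w) := by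
    ext u
    simp only [mem_image, mem_filter, mem_univ, true_and]
    exact ⟨fun ⟨k, hk, hku⟩ => hku ▸ by simpa using hk, fun hu => ⟨_, hu, σ.apply_symm_apply u⟩⟩
  simp only [greedyVertex, image_eq, initialSegment, Fin.le_def, Fin.lt_def,
    Nat.lt_succ_iff]

end initialSegment

theorem sum_greedyVertex (g : Finset V → ℝ) (σ : Fin (Fintype.card V) ≃ V) :
    ∑ w, greedyVertex g σ w = g univ - g ∅ := by
  rw [← Equiv.sum_comp σ]
  simp only [greedyVertex_apply, Equiv.symm_apply_apply]
  rw [Fin.sum_univ_eq_sum_range (fun j => g (initialSegment σ (j + 1)) - g (initialSegment σ j)),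
    Finset.sum_range_sub (fun j => g (initialSegment σ j)), initialSegment_card,
    initialSegment_zero]

theorem IsSubmodular.sum_greedyVertex_le {g : Finset V → ℝ} (hg : IsSubmodular g) (hg0 : g ∅ = 0)
    (σ : Fin (Fintype.card V) ≃ V) (S : Finset V) :
    ∑ w ∈ S, greedyVertex g σ w ≤ g S := by
  suffices h : ∀ j ≤ Fintype.card V,
      ∑ w ∈ S ∩ initialSegment σ j, greedyVertex g σ w ≤ g (S ∩ initialSegment σ j) by
    simpa [initialSegment_card] using h _ le_rfl
  intro j hj
  induction j with
  | zero => simp [initialSegment_zero, hg0]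
  | succ j ih =>
    have hjn : j < Fintype.card V := hj
    have ha : σ ⟨j, hjn⟩ ∉ initialSegment σ j := by simp [mem_initialSegment]
    rw [initialSegment_succ σ hjn]
    by_cases haS : σ ⟨j, hjn⟩ ∈ S
    · have hgreedy : greedyVertex g σ (σ ⟨j, hjn⟩)
          = g (insert (σ ⟨j, hjn⟩) (initialSegment σ j)) - g (initialSegment σ j) := by
        simp [greedyVertex_apply, initialSegment_succ σ hjn]
      have hmarg := hg.marginal_antitone (X := S ∩ initialSegment σ j) inter_subset_right ha
      rw [inter_insert_of_mem haS, sum_insert fun h => ha (mem_inter.1 h).2, hgreedy]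
      linarith [ih hjn.le]
    · rw [inter_insert_of_notMem haS]
      exact ih hjn.le

theorem greedyVertex_mem_basePolytope {g : Finset V → ℝ} (hg : IsSubmodular g) (hg0 : g ∅ = 0)
    (σ : Fin (Fintype.card V) ≃ V) : greedyVertex g σ ∈ basePolytope g :=
  ⟨hg.sum_greedyVertex_le hg0 σ, by rw [sum_greedyVertex, hg0, sub_zero]⟩

theorem marginal_sub_muEnlargement_marginal {f : Finset V → ℝ} (h0 : f ∅ = 0) (ν : ℝ)
    {A B : Finset V} (hA : A.Nonempty) (hB : B ≠ univ) :
    (f A - f B) - (muEnlargement f ν A - muEnlargement f ν B)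
      = (if A = univ then f univ + ν else 0) - (if B = ∅ then ν else 0) := by
  simp only [muEnlargement, hA.ne_empty, hB, false_or, or_false]
  split_ifs with hAu hBe hBe <;> (try subst hAu) <;> (try subst hBe) <;> (try rw [h0]) <;> ring

theorem greedyVertex_sub_greedyVertex_muEnlargement {f : Finset V → ℝ} (h0 : f ∅ = 0) (ν : ℝ)
    (σ : Fin (Fintype.card V) ≃ V) (w : V) :
    greedyVertex f σ w - greedyVertex (muEnlargement f ν) σ w
      = (if initialSegment σ (σ.symm w + 1) = univ then f univ + ν else 0)
        - (if initialSegment σ (σ.symm w) = ∅ then ν else 0) := by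
  have hA : (initialSegment σ (σ.symm w + 1)).Nonempty := ⟨w, by simp [mem_initialSegment]⟩
  have hB : initialSegment σ (σ.symm w) ≠ univ := fun h => by
    have hw : w ∈ initialSegment σ (σ.symm w) := h ▸ mem_univ w
    simp [mem_initialSegment] at hw
  rw [greedyVertex_apply, greedyVertex_apply, ← marginal_sub_muEnlargement_marginal h0 ν hA hB]

theorem neg_le_sum_min_greedyVertex_sub_muEnlargement {f : Finset V → ℝ}
    (h0 : f ∅ = 0) {ν : ℝ} (hν : max 0 (-f univ) ≤ ν) (σ : Fin (Fintype.card V) ≃ V) :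
    -ν ≤ ∑ w, min (greedyVertex f σ w - greedyVertex (muEnlargement f ν) σ w) 0 := by
  obtain ⟨hν0, hfν⟩ := max_le_iff.1 hν
  have hle (w : V) : -ν ≤ min (greedyVertex f σ w - greedyVertex (muEnlargement f ν) σ w) 0 := by
    refine le_min ?_ (by linarith)
    rw [greedyVertex_sub_greedyVertex_muEnlargement h0]
    split_ifs <;> linarith
  have hzero (w : V) (hw : (initialSegment σ (σ.symm w)).Nonempty) :
      min (greedyVertex f σ w - greedyVertex (muEnlargement f ν) σ w) 0 = 0 := by
    refine min_eq_right ?_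
    rw [greedyVertex_sub_greedyVertex_muEnlargement h0, if_neg hw.ne_empty]
    split_ifs <;> linarith
  rcases isEmpty_or_nonempty V with hV | hV
  · simpa using hν0
  · set w₀ := σ ⟨0, Fintype.card_pos⟩
    refine (hle w₀).trans_eq (sum_eq_single w₀ (fun w _ hw => hzero w ⟨w₀, ?_⟩) (by simp)).symm
    rw [mem_initialSegment, Equiv.symm_apply_apply]
    exact Nat.pos_of_ne_zero fun h => hw (by rw [← σ.apply_symm_apply w]; congr 1; exact Fin.ext h)

theorem slide_back_general (f : Finset V → ℝ) (hf : IsSubmodular f) (h0 : f ∅ = 0)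
    (μ : ℝ)
    (W : Finset V) (hW : f W = -μ)
    (h : ℕ)
    (μs : Fin h → ℝ)
    (hμs : ∀ i : Fin h, max 0 (-(f Finset.univ)) ≤ μs i ∧ μs i ≤ μ)
    (σ : Fin h → (Fin (Fintype.card V) ≃ V))
    (lam : Fin h → ℝ) (hlam : ∀ i, 0 ≤ lam i) (hsum : (∑ i, lam i) = 1) :
    (fun v => ∑ i, lam i * greedyVertex f (σ i) v) ∈ basePolytope f ∧
    f W ≤ (∑ v, min (∑ i, lam i * greedyVertex f (σ i) v) 0) +
      (∑ v, |∑ i, lam i * greedyVertex (muEnlargement f (μs i)) (σ i) v|) / 2 := by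
  refine ⟨?_, ?_⟩
  · have hcomb : (fun v => ∑ i, lam i * greedyVertex f (σ i) v)
        = ∑ i, lam i • greedyVertex f (σ i) := by
      ext v; simp [Finset.sum_apply]
    rw [hcomb]
    exact (convex_basePolytope f).sum_mem (fun i _ => hlam i) hsum
      fun i _ => greedyVertex_mem_basePolytope hf h0 (σ i)
  · have hv : ∑ w, ∑ i, lam i * greedyVertex (muEnlargement f (μs i)) (σ i) w = 0 := by
      rw [sum_comm]
      exact sum_eq_zero fun i _ => by rw [← mul_sum, sum_greedyVertex]; simp [muEnlargement]
    have hd : -μ ≤ ∑ i, lam i * ∑ w, min (greedyVertex f (σ i) w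
        - greedyVertex (muEnlargement f (μs i)) (σ i) w) 0 :=
      calc -μ = ∑ i, lam i * -μ := by rw [← sum_mul, hsum, one_mul]
        _ ≤ _ := sum_le_sum fun i _ => mul_le_mul_of_nonneg_left ((neg_le_neg (hμs i).2).trans
            (neg_le_sum_min_greedyVertex_sub_muEnlargement h0 (hμs i).1 (σ i))) (hlam i)
    have hy (w : V) : ∑ i, lam i * greedyVertex f (σ i) w
        = ∑ i, lam i * greedyVertex (muEnlargement f (μs i)) (σ i) w
          + ∑ i, lam i * (greedyVertex f (σ i) w
            - greedyVertex (muEnlargement f (μs i)) (σ i) w) := by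
      rw [← sum_add_distrib]; simp only [mul_sub, add_sub_cancel]
    have hsplit := sum_min_zero_add_le
      (fun w => ∑ i, lam i * greedyVertex (muEnlargement f (μs i)) (σ i) w)
      (fun w => ∑ i, lam i * (greedyVertex f (σ i) w
        - greedyVertex (muEnlargement f (μs i)) (σ i) w))
    simp only [← hy, sum_min_zero_eq_neg_half_sum_abs hv] at hsplit
    linarith [sum_mul_sum_min_zero_le hlam
      (fun i w => greedyVertex f (σ i) w - greedyVertex (muEnlargement f (μs i)) (σ i) w)]

/-- Pulling back a convex combination of extreme bases of enlargements
`B(f_{μ_i})` to a point `y ∈ B(f)` certifying `f(W) ≤ y⁻(V) + ‖v‖₁/2`. -/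
theorem slide_back (f : Finset V → ℝ) (hf : IsSubmodular f) (h0 : f ∅ = 0)
    (μ : ℝ) (hμ : max 0 (-(f Finset.univ)) ≤ μ)
    (W : Finset V) (hW : f W = -μ)
    (h : ℕ) (hh : 1 ≤ h)
    (μs : Fin h → ℝ)
    (hμs : ∀ i : Fin h, max 0 (-(f Finset.univ)) ≤ μs i ∧ μs i ≤ μ)
    (σ : Fin h → (Fin (Fintype.card V) ≃ V))
    (lam : Fin h → ℝ) (hlam : ∀ i, 0 ≤ lam i) (hsum : (∑ i, lam i) = 1) :
    (fun v => ∑ i, lam i * greedyVertex f (σ i) v) ∈ basePolytope f ∧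
    f W ≤ (∑ v, min (∑ i, lam i * greedyVertex f (σ i) v) 0) +
      (∑ v, |∑ i, lam i * greedyVertex (muEnlargement f (μs i)) (σ i) v|) / 2 :=
  slide_back_general f hf h0 μ W hW h μs hμs σ lam hlam hsum
end
end
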